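/- With ρ_N the free convolution μ_{Nσ_N²} ⊞ ν_N, β_N(z) := N(E[G_{μ_N}(z)] − G_{ρ_N}(z)) the bias of the Stieltjes transform of the empirical spectral measure μ_N of X_N = W_N + D_N, and R̃(z) := ((z − σ_N² E[Tr R_N(z)])I − D_N)⁻¹, there is a polynomial P_N of degree 5 with coefficients bounded uniformly in N such that |β_N(z)| ≤ N⁻¹ P_N(|Im z|⁻¹) Σ_{k=1}^N |R̃(z)_{kk}|² for all z ∈ ℂ \ ℝ, assuming |β̃_N(z)| := |E[Tr R_N(z)] − Tr R̃(z)| ≤ N⁻¹ P̃_N(|Im z|⁻¹) Σ_k |R̃(z)_{kk}|² for a degree-3 polynomial P̃_N with bounded coefficients. -/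

import Mathlib

/-!
Haagerup–Thorbjørnsen: with `s = Nσ_N²`, `ω̃(z) = z - s G_κ(z)` and `z' = H(ω̃(z))`, one has
`z' - z = -σ_N² β̃(z)`. If `σ_N² |β̃(z)| < Im z / 2`, then `z'` lies in the upper half-plane, so
subordination gives `ω(z') = ω̃(z)`, hence `G_ρ(z') = G_ν(ω̃(z))` and
`β(z) = β̃(z) + N (G_ρ(z') - G_ρ(z))`; the resolvent identity bounds the last term by
`2 Nσ_N² |β̃(z)| / (Im z)²`. Otherwise the trivial bound `|β(z)| ≤ 2N / Im z` is already at most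
`4 Nσ_N² |β̃(z)| / (Im z)²`. Either way `|β(z)| ≤ (1 + 4 Nσ_N² (Im z)⁻²) |β̃(z)|`, so
`P_N = P̃_N (1 + 4 cσ X²)` works. The lower half-plane follows by complex conjugation.
-/

open MeasureTheory ComplexConjugate Polynomial

/-- The paper's sign convention, opposite to that of `MeasureTheory.resolventTransform`. -/
noncomputable def stieltjes (μ : Measure ℝ) (z : ℂ) : ℂ :=
  ∫ t : ℝ, (z - (t : ℂ))⁻¹ ∂μ

section Stieltjes

lemma sub_ofReal_ne_zero {z : ℂ} (hz : z.im ≠ 0) (t : ℝ) : z - (t : ℂ) ≠ 0 := fun h ↦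
  hz (by simpa using congrArg Complex.im h)

lemma norm_inv_sub_ofReal_le {z : ℂ} (hz : z.im ≠ 0) (t : ℝ) :
    ‖(z - (t : ℂ))⁻¹‖ ≤ |z.im|⁻¹ := by
  rw [norm_inv]
  refine inv_anti₀ (abs_pos.2 hz) ?_
  simpa using Complex.abs_im_le_norm (z - t)

lemma stieltjes_conj (μ : Measure ℝ) (z : ℂ) : stieltjes μ (conj z) = conj (stieltjes μ z) := by
  simp only [stieltjes, ← integral_conj, map_inv₀, map_sub, Complex.conj_ofReal]

variable (μ : Measure ℝ) {z : ℂ}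

lemma integrable_inv_sub_ofReal [IsFiniteMeasure μ] (hz : z.im ≠ 0) :
    Integrable (fun t : ℝ ↦ (z - (t : ℂ))⁻¹) μ :=
  (integrable_const |z.im|⁻¹).mono'
    ((continuous_const.sub Complex.continuous_ofReal).inv₀
      (sub_ofReal_ne_zero hz)).aestronglyMeasurable
    (.of_forall (norm_inv_sub_ofReal_le hz))

lemma im_stieltjes_nonpos [IsFiniteMeasure μ] (hz : 0 < z.im) : (stieltjes μ z).im ≤ 0 := by
  rw [stieltjes, ← Complex.imCLM_apply, ← ContinuousLinearMap.integral_comp_comm _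
    (integrable_inv_sub_ofReal μ hz.ne')]
  refine integral_nonpos fun t ↦ ?_
  simp only [Complex.imCLM_apply, Complex.inv_im, Complex.sub_im, Complex.ofReal_im, sub_zero]
  exact div_nonpos_of_nonpos_of_nonneg (neg_nonpos.2 hz.le) (Complex.normSq_nonneg _)

variable [IsProbabilityMeasure μ]

lemma norm_stieltjes_le (hz : z.im ≠ 0) : ‖stieltjes μ z‖ ≤ |z.im|⁻¹ := by
  simpa [stieltjes] using
    norm_integral_le_of_norm_le_const (μ := μ) (.of_forall (norm_inv_sub_ofReal_le hz))

/-- The resolvent identity `(z' - t)⁻¹ - (z - t)⁻¹ = (z - z') (z' - t)⁻¹ (z - t)⁻¹`, integrated. -/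
lemma norm_stieltjes_sub_stieltjes_le {z' : ℂ} (hz : z.im ≠ 0) (hz' : z'.im ≠ 0) :
    ‖stieltjes μ z' - stieltjes μ z‖ ≤ ‖z - z'‖ * (|z'.im|⁻¹ * |z.im|⁻¹) := by
  rw [stieltjes, stieltjes, ← integral_sub (integrable_inv_sub_ofReal μ hz')
    (integrable_inv_sub_ofReal μ hz)]
  refine (norm_integral_le_of_norm_le_const (C := ‖z - z'‖ * (|z'.im|⁻¹ * |z.im|⁻¹))
    (.of_forall fun t ↦ ?_)).trans_eq (by simp)
  rw [inv_sub_inv (sub_ofReal_ne_zero hz' t) (sub_ofReal_ne_zero hz t), sub_sub_sub_cancel_right,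
    div_eq_mul_inv, mul_inv, norm_mul, norm_mul]
  gcongr
  exacts [norm_inv_sub_ofReal_le hz' t, norm_inv_sub_ofReal_le hz t]

end Stieltjes

section Subordination

lemma half_im_lt_im_of_norm_sub_lt {z z' : ℂ} (h : ‖z' - z‖ < z.im / 2) : z.im / 2 < z'.im := by
  have := (abs_le.1 (Complex.abs_im_le_norm (z' - z))).1
  rw [Complex.sub_im] at this
  linarith

lemma norm_stieltjes_sub_stieltjes_le_of_norm_sub_lt (μ : Measure ℝ) [IsProbabilityMeasure μ]
    {z z' : ℂ} (hz : 0 < z.im) (h : ‖z' - z‖ < z.im / 2) :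
    ‖stieltjes μ z' - stieltjes μ z‖ ≤ 2 * ‖z' - z‖ * z.im⁻¹ ^ 2 := by
  have hz' := half_im_lt_im_of_norm_sub_lt h
  have hinv' : |z'.im|⁻¹ ≤ 2 * z.im⁻¹ := by
    rw [abs_of_pos (by linarith), ← div_eq_mul_inv, ← inv_div]
    exact inv_anti₀ (by positivity) hz'.le
  calc ‖stieltjes μ z' - stieltjes μ z‖ ≤ ‖z - z'‖ * (|z'.im|⁻¹ * |z.im|⁻¹) :=
        norm_stieltjes_sub_stieltjes_le μ hz.ne' (by linarith)
    _ ≤ ‖z' - z‖ * (2 * z.im⁻¹ * z.im⁻¹) := by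
        rw [norm_sub_rev, abs_of_pos hz]
        gcongr
    _ = 2 * ‖z' - z‖ * z.im⁻¹ ^ 2 := by ring

lemma norm_stieltjes_sub_stieltjes_le_two_mul (κ ρ : Measure ℝ) [IsProbabilityMeasure κ]
    [IsProbabilityMeasure ρ] {z : ℂ} (hz : z.im ≠ 0) :
    ‖stieltjes κ z - stieltjes ρ z‖ ≤ 2 * |z.im|⁻¹ :=
  (norm_sub_le _ _).trans <| by
    linarith [norm_stieltjes_le κ hz, norm_stieltjes_le ρ hz]

lemma im_le_im_sub_mul_stieltjes (μ : Measure ℝ) [IsFiniteMeasure μ] {s : ℝ} (hs : 0 ≤ s)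
    {z : ℂ} (hz : 0 < z.im) : z.im ≤ (z - s * stieltjes μ z).im := by
  have := mul_nonpos_of_nonneg_of_nonpos hs (im_stieltjes_nonpos μ hz)
  simp only [Complex.sub_im, Complex.im_ofReal_mul]
  linarith

variable {κ ρ : Measure ℝ} [IsProbabilityMeasure κ] [IsProbabilityMeasure ρ] {s : ℝ} {g : ℂ → ℂ}

theorem norm_stieltjes_sub_le_of_subordination_of_im_pos (hs : 0 ≤ s)
    (hsub : ∀ w, 0 < w.im → 0 < (w + s * g w).im → stieltjes ρ (w + s * g w) = g w)
    {z : ℂ} (hz : 0 < z.im) :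
    ‖stieltjes κ z - stieltjes ρ z‖ ≤
      (1 + 4 * s * z.im⁻¹ ^ 2) * ‖stieltjes κ z - g (z - s * stieltjes κ z)‖ := by
  set w := z - s * stieltjes κ z with hw
  set e := ‖stieltjes κ z - g w‖
  have hwz : z.im ≤ w.im := im_le_im_sub_mul_stieltjes κ hs hz
  have hdisp : ‖w + s * g w - z‖ = s * e := by
    rw [show w + s * g w - z = -(s * (stieltjes κ z - g w)) by rw [hw]; ring, norm_neg,
      norm_mul, Complex.norm_real, Real.norm_of_nonneg hs]
  rw [add_mul, one_mul]
  rcases lt_or_ge (s * e) (z.im / 2) with hsmall | hlarge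
  · rw [← hdisp] at hsmall
    have hz' := half_im_lt_im_of_norm_sub_lt hsmall
    have hρ : stieltjes ρ (w + s * g w) = g w := hsub w (by linarith) (by linarith)
    calc ‖stieltjes κ z - stieltjes ρ z‖
        = ‖(stieltjes κ z - g w) + (stieltjes ρ (w + s * g w) - stieltjes ρ z)‖ := by
          rw [hρ]; ring_nf
      _ ≤ e + 2 * (s * e) * z.im⁻¹ ^ 2 := by
          rw [← hdisp]
          exact norm_add_le_of_le le_rfl
            (norm_stieltjes_sub_stieltjes_le_of_norm_sub_lt ρ hz hsmall)
      _ ≤ e + 4 * s * z.im⁻¹ ^ 2 * e := by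
          have : 0 ≤ s * e * z.im⁻¹ ^ 2 := by positivity
          linarith
  · have hone : 1 ≤ 2 * (s * e) * z.im⁻¹ := by
      rw [← mul_inv_cancel₀ hz.ne']
      gcongr
      linarith
    calc ‖stieltjes κ z - stieltjes ρ z‖ ≤ 2 * z.im⁻¹ := by
          simpa [abs_of_pos hz] using norm_stieltjes_sub_stieltjes_le_two_mul κ ρ hz.ne'
      _ ≤ 2 * z.im⁻¹ * (2 * (s * e) * z.im⁻¹) := le_mul_of_one_le_right (by positivity) hone
      _ = 4 * s * z.im⁻¹ ^ 2 * e := by ring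
      _ ≤ e + 4 * s * z.im⁻¹ ^ 2 * e := le_add_of_nonneg_left (norm_nonneg _)

theorem norm_stieltjes_sub_le_of_subordination (hs : 0 ≤ s)
    (hg : ∀ w, g (conj w) = conj (g w))
    (hsub : ∀ w, 0 < w.im → 0 < (w + s * g w).im → stieltjes ρ (w + s * g w) = g w)
    {z : ℂ} (hz : z.im ≠ 0) :
    ‖stieltjes κ z - stieltjes ρ z‖ ≤
      (1 + 4 * s * |z.im|⁻¹ ^ 2) * ‖stieltjes κ z - g (z - s * stieltjes κ z)‖ := by
  rcases hz.lt_or_gt with hneg | hpos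
  · have h := norm_stieltjes_sub_le_of_subordination_of_im_pos (κ := κ) hs hsub
      (z := conj z) (by simpa using hneg)
    rw [stieltjes_conj, stieltjes_conj, ← Complex.conj_ofReal, ← map_mul, ← map_sub _ z, hg,
      ← map_sub, ← map_sub, RCLike.norm_conj, RCLike.norm_conj, Complex.conj_im] at h
    rwa [abs_of_neg hneg]
  · rw [abs_of_pos hpos]
    exact norm_stieltjes_sub_le_of_subordination_of_im_pos hs hsub hpos

end Subordination

lemma Polynomial.natDegree_mul_one_add_C_mul_X_pow_le {R : Type*} [Semiring R] {p : R[X]} {m : ℕ}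
    (hp : p.natDegree ≤ m) (a : R) (k : ℕ) : (p * (1 + C a * X ^ k)).natDegree ≤ m + k :=
  natDegree_mul_le.trans <| add_le_add hp <|
    (natDegree_add_le _ _).trans (max_le (by simp) (natDegree_C_mul_X_pow_le a k))

lemma Polynomial.abs_coeff_mul_one_add_C_mul_X_pow_le {p : ℝ[X]} {c : ℝ}
    (hp : ∀ i, |p.coeff i| ≤ c) (a : ℝ) (k i : ℕ) :
    |(p * (1 + C a * X ^ k)).coeff i| ≤ (1 + |a|) * c := by
  have hc : 0 ≤ c := (abs_nonneg _).trans (hp 0)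
  rw [mul_add, mul_one, mul_left_comm, coeff_add, coeff_C_mul, coeff_mul_X_pow']
  refine (abs_add_le _ _).trans ?_
  split_ifs
  · rw [abs_mul, add_mul, one_mul]
    gcongr
    exacts [hp i, hp (i - k)]
  · simpa [add_mul] using (hp i).trans (le_add_of_nonneg_right (by positivity))

theorem bias_stieltjes_bound_general
    (σ2 : ℕ → ℝ) (hσpos : ∀ N, 0 ≤ σ2 N) (cσ : ℝ) (hσ : ∀ N : ℕ, (N : ℝ) * σ2 N ≤ cσ)
    (D : (N : ℕ) → Fin N → ℝ)
    (κ ρ : ℕ → Measure ℝ)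
    (hκ : ∀ N, IsProbabilityMeasure (κ N)) (hρ : ∀ N, IsProbabilityMeasure (ρ N))
    (Gν : ℕ → ℂ → ℂ)
    (hGν : ∀ N z, Gν N z = (N : ℂ)⁻¹ * ∑ j : Fin N, (z - ((D N j : ℝ) : ℂ))⁻¹)
    (Gκ : ℕ → ℂ → ℂ) (hGκ : ∀ N z, Gκ N z = ∫ t : ℝ, (z - (t : ℂ))⁻¹ ∂κ N)
    (Gρ : ℕ → ℂ → ℂ) (hGρ : ∀ N z, Gρ N z = ∫ t : ℝ, (z - (t : ℂ))⁻¹ ∂ρ N)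
    (H : ℕ → ℂ → ℂ) (hH : ∀ N w, H N w = w + ((N : ℝ) * σ2 N : ℝ) * Gν N w)
    (ω : ℕ → ℂ → ℂ)
    (hsub : ∀ N : ℕ, ∀ z : ℂ, 0 < z.im →
      Gρ N z = Gν N (ω N z) ∧ H N (ω N z) = z ∧ 0 < (ω N z).im)
    (hinv : ∀ N : ℕ, ∀ w : ℂ, 0 < w.im → 0 < (H N w).im → ω N (H N w) = w)
    (ωt : ℕ → ℂ → ℂ) (hωt : ∀ N z, ωt N z = z - ((N : ℝ) * σ2 N : ℝ) * Gκ N z)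
    (βt β : ℕ → ℂ → ℂ)
    (hβt : ∀ N z, βt N z = (N : ℂ) * (Gκ N z - Gν N (ωt N z)))
    (hβ : ∀ N z, β N z = (N : ℂ) * (Gκ N z - Gρ N z))
    (S : ℕ → ℂ → ℝ)
    (Pt : ℕ → Polynomial ℝ) (hPtdeg : ∀ N, (Pt N).natDegree ≤ 3)
    (cPt : ℝ) (hPtcoeff : ∀ N i, |(Pt N).coeff i| ≤ cPt)
    (hPtbound : ∀ N : ℕ, 1 ≤ N → ∀ z : ℂ, z.im ≠ 0 →
      ‖βt N z‖ ≤ (N : ℝ)⁻¹ * (Pt N).eval |z.im|⁻¹ * S N z) :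
    ∃ P : ℕ → Polynomial ℝ, (∀ N, (P N).natDegree ≤ 5) ∧
      (∃ cP : ℝ, ∀ N i, |(P N).coeff i| ≤ cP) ∧
      ∀ N : ℕ, 1 ≤ N → ∀ z : ℂ, z.im ≠ 0 →
        ‖β N z‖ ≤ (N : ℝ)⁻¹ * (P N).eval |z.im|⁻¹ * S N z := by
  have hcσ : 0 ≤ cσ := by simpa using hσ 0
  refine ⟨fun N ↦ Pt N * (1 + C (4 * cσ) * X ^ 2),
    fun N ↦ natDegree_mul_one_add_C_mul_X_pow_le (hPtdeg N) _ 2,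
    ⟨_, fun N ↦ abs_coeff_mul_one_add_C_mul_X_pow_le (hPtcoeff N) _ 2⟩, fun N hN z hz ↦ ?_⟩
  have := hκ N
  have := hρ N
  have hGκ' : Gκ N = stieltjes (κ N) := funext (hGκ N)
  have hGρ' : Gρ N = stieltjes (ρ N) := funext (hGρ N)
  have hGν_conj (w : ℂ) : Gν N (conj w) = conj (Gν N w) := by
    simp [hGν, map_sum, map_inv₀, Complex.conj_ofReal]
  have hGρ_H (w : ℂ) (hw : 0 < w.im) (hHw : 0 < (w + (N * σ2 N : ℝ) * Gν N w).im) :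
      stieltjes (ρ N) (w + (N * σ2 N : ℝ) * Gν N w) = Gν N w := by
    rw [← hH] at hHw ⊢
    have h := (hsub N (H N w) hHw).1
    rwa [hinv N w hw hHw, hGρ'] at h
  have hbias : ‖β N z‖ ≤ (1 + 4 * (N * σ2 N) * |z.im|⁻¹ ^ 2) * ‖βt N z‖ := by
    have := norm_stieltjes_sub_le_of_subordination (κ := κ N)
      (mul_nonneg N.cast_nonneg (hσpos N)) hGν_conj hGρ_H hz
    rw [hβ, hβt, hωt, hGκ', hGρ', norm_mul, norm_mul, mul_left_comm]
    exact mul_le_mul_of_nonneg_left this (norm_nonneg _)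
  calc ‖β N z‖ ≤ (1 + 4 * (N * σ2 N) * |z.im|⁻¹ ^ 2) * ‖βt N z‖ := hbias
    _ ≤ (1 + 4 * cσ * |z.im|⁻¹ ^ 2) * ((N : ℝ)⁻¹ * (Pt N).eval |z.im|⁻¹ * S N z) := by
      gcongr
      exacts [hσ N, hPtbound N hN z hz]
    _ = _ := by simp only [eval_mul, eval_add, eval_one, eval_C, eval_pow, eval_X]; ring

/-- Bound on the bias of the Stieltjes transform (Haagerup–Thorbjørnsen trick): with
`β_N(z) = N(E[G_{μ_N}(z)] − G_{ρ_N}(z))` (here `Gκ N = E[G_{μ_N}]` is the Stieltjes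
transform of the mean spectral measure `κ N`, `ρ N = μ_{Nσ_N²} ⊞ ν_N` is characterized by
the subordination function `ω N` inverting `H N(w) = w + Nσ_N² G_{ν_N}(w)`), with
`ω̃ N z = z − Nσ_N² Gκ N z`, `S N z = Σ_k |R̃(z)_{kk}|² = Σ_k |(ω̃ N z − D_k)⁻¹|²`, and
assuming the bound `|β̃_N(z)| ≤ N⁻¹ P̃_N(|Im z|⁻¹) S N z` on
`β̃_N(z) = N(Gκ N z − G_{ν_N}(ω̃ N z)) = E[Tr R_N(z)] − Tr R̃(z)` with `P̃_N` of degree `3`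
with uniformly bounded coefficients, there is a family `P_N` of polynomials of degree `5`
with uniformly bounded coefficients such that
`|β_N(z)| ≤ N⁻¹ P_N(|Im z|⁻¹) S N z` for all `z ∉ ℝ`. -/
theorem bias_stieltjes_bound
    (σ2 : ℕ → ℝ) (hσpos : ∀ N, 0 ≤ σ2 N) (cσ : ℝ) (hσ : ∀ N : ℕ, (N : ℝ) * σ2 N ≤ cσ)
    (D : (N : ℕ) → Fin N → ℝ)
    (κ ρ : ℕ → Measure ℝ)
    (hκ : ∀ N, IsProbabilityMeasure (κ N)) (hρ : ∀ N, IsProbabilityMeasure (ρ N))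
    (Gν : ℕ → ℂ → ℂ)
    (hGν : ∀ N z, Gν N z = (N : ℂ)⁻¹ * ∑ j : Fin N, (z - ((D N j : ℝ) : ℂ))⁻¹)
    (Gκ : ℕ → ℂ → ℂ) (hGκ : ∀ N z, Gκ N z = ∫ t : ℝ, (z - (t : ℂ))⁻¹ ∂κ N)
    (Gρ : ℕ → ℂ → ℂ) (hGρ : ∀ N z, Gρ N z = ∫ t : ℝ, (z - (t : ℂ))⁻¹ ∂ρ N)
    (H : ℕ → ℂ → ℂ) (hH : ∀ N w, H N w = w + ((N : ℝ) * σ2 N : ℝ) * Gν N w)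
    (ω : ℕ → ℂ → ℂ)
    (hsub : ∀ N : ℕ, ∀ z : ℂ, 0 < z.im →
      Gρ N z = Gν N (ω N z) ∧ H N (ω N z) = z ∧ 0 < (ω N z).im)
    (hinv : ∀ N : ℕ, ∀ w : ℂ, 0 < w.im → 0 < (H N w).im → ω N (H N w) = w)
    (ωt : ℕ → ℂ → ℂ) (hωt : ∀ N z, ωt N z = z - ((N : ℝ) * σ2 N : ℝ) * Gκ N z)
    (βt β : ℕ → ℂ → ℂ)
    (hβt : ∀ N z, βt N z = (N : ℂ) * (Gκ N z - Gν N (ωt N z)))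
    (hβ : ∀ N z, β N z = (N : ℂ) * (Gκ N z - Gρ N z))
    (S : ℕ → ℂ → ℝ) (hS : ∀ N z, S N z = ∑ j : Fin N, ‖(ωt N z - ((D N j : ℝ) : ℂ))⁻¹‖ ^ 2)
    (Pt : ℕ → Polynomial ℝ) (hPtdeg : ∀ N, (Pt N).natDegree ≤ 3)
    (cPt : ℝ) (hPtcoeff : ∀ N i, |(Pt N).coeff i| ≤ cPt)
    (hPtbound : ∀ N : ℕ, 1 ≤ N → ∀ z : ℂ, z.im ≠ 0 →
      ‖βt N z‖ ≤ (N : ℝ)⁻¹ * (Pt N).eval |z.im|⁻¹ * S N z) :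
    ∃ P : ℕ → Polynomial ℝ, (∀ N, (P N).natDegree ≤ 5) ∧
      (∃ cP : ℝ, ∀ N i, |(P N).coeff i| ≤ cP) ∧
      ∀ N : ℕ, 1 ≤ N → ∀ z : ℂ, z.im ≠ 0 →
        ‖β N z‖ ≤ (N : ℝ)⁻¹ * (P N).eval |z.im|⁻¹ * S N z :=
  bias_stieltjes_bound_general σ2 hσpos cσ hσ D κ ρ hκ hρ Gν hGν Gκ hGκ Gρ hGρ H hH ω hsub hinv ωt
    hωt βt β hβt hβ S Pt hPtdeg cPt hPtcoeff hPtbound
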